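/- arXiv:2001.10250 — 6 statements merged into one kernel-verified Lean document; each statement's English description precedes it below -/
import Mathlib

section
/- Let n ≥ 1, let J be a real orthogonal n×n matrix, let F₀ be an invertible real n×n matrix, and set M = F₀ J F₀⁻¹. Then the set of symmetric positive definite matrices P satisfying M P Mᵀ = P equals { F₀ A Aᵀ F₀ᵀ : A invertible real n×n matrix with A J = J A }. -/
/-!
Writing `P = F₀ Q F₀ᵀ`, the condition `M P Mᵀ = P` becomes `J Q Jᵀ = Q`, which for orthogonal `J`
says that `J` commutes with `Q`. A positive definite `Q` commuting with `J` factors as `A Aᵀ` with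
`A = √Q`, and `√Q` commutes with `J` because it is a continuous function of `Q`. Conversely
`J A Aᵀ Jᵀ = A J Jᵀ Aᵀ = A Aᵀ` whenever `A` commutes with `J`.
-/

open Matrix

namespace Matrix

variable {ι R : Type*} [Fintype ι] [DecidableEq ι]

section CommRing

variable [CommRing R] {F J : Matrix ι ι R}

theorem mul_mul_transpose_inj (hF : IsUnit F) {X Y : Matrix ι ι R} :
    F * X * Fᵀ = F * Y * Fᵀ ↔ X = Y := by
  rw [((isUnit_transpose F).mpr hF).mul_left_inj, hF.mul_right_inj]

theorem exists_eq_mul_mul_transpose (hF : IsUnit F) (P : Matrix ι ι R) :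
    ∃ Q, P = F * Q * Fᵀ := by
  refine ⟨F⁻¹ * P * F⁻¹ᵀ, ?_⟩
  have hdet : IsUnit F.det := (isUnit_iff_isUnit_det F).mp hF
  rw [transpose_nonsing_inv, Matrix.mul_assoc F⁻¹, mul_nonsing_inv_cancel_left _ _ hdet,
    nonsing_inv_mul_cancel_right _ _ (isUnit_det_transpose F hdet)]

theorem mul_mul_transpose_eq_self_iff_commute (hJ : J * Jᵀ = 1) {Q : Matrix ι ι R} :
    J * Q * Jᵀ = Q ↔ Commute J Q := by
  have hJ' : Jᵀ * J = 1 := mul_eq_one_comm.mp hJ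
  constructor
  · intro h
    calc J * Q = J * Q * (Jᵀ * J) := by rw [hJ', Matrix.mul_one]
      _ = Q * J := by rw [← Matrix.mul_assoc, h]
  · intro h
    rw [h.eq, Matrix.mul_assoc, hJ, Matrix.mul_one]

theorem similar_mul_mul_transpose_eq_self_iff (hF : IsUnit F) {Q : Matrix ι ι R} :
    (F * J * F⁻¹) * (F * Q * Fᵀ) * (F * J * F⁻¹)ᵀ = F * Q * Fᵀ ↔ J * Q * Jᵀ = Q := by
  have hFJ : F * J * F⁻¹ * F = F * J := by
    rw [Matrix.mul_assoc, nonsing_inv_mul _ ((isUnit_iff_isUnit_det F).mp hF), Matrix.mul_one]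
  have hconj : (F * J * F⁻¹) * (F * Q * Fᵀ) * (F * J * F⁻¹)ᵀ = F * (J * Q * Jᵀ) * Fᵀ := by
    calc (F * J * F⁻¹) * (F * Q * Fᵀ) * (F * J * F⁻¹)ᵀ
        = (F * J * F⁻¹ * F) * Q * (F * J * F⁻¹ * F)ᵀ := by
          simp only [transpose_mul, Matrix.mul_assoc]
      _ = F * (J * Q * Jᵀ) * Fᵀ := by
          rw [hFJ, transpose_mul]; simp only [Matrix.mul_assoc]
  rw [hconj, mul_mul_transpose_inj hF]

theorem mul_mul_transpose_eq_self_of_commute (hJ : J * Jᵀ = 1) {A : Matrix ι ι R}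
    (hAJ : A * J = J * A) : J * (A * Aᵀ) * Jᵀ = A * Aᵀ := by
  have hAJT : Aᵀ * Jᵀ = Jᵀ * Aᵀ := by rw [← transpose_mul, ← transpose_mul, hAJ]
  calc J * (A * Aᵀ) * Jᵀ = (J * A) * (Aᵀ * Jᵀ) := by simp only [Matrix.mul_assoc]
    _ = A * (J * Jᵀ) * Aᵀ := by rw [← hAJ, hAJT]; simp only [Matrix.mul_assoc]
    _ = A * Aᵀ := by rw [hJ, Matrix.mul_one]

end CommRing

theorem posDef_mul_mul_transpose_iff {F Q : Matrix ι ι ℝ} (hF : IsUnit F) :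
    (F * Q * Fᵀ).PosDef ↔ Q.PosDef := by
  rw [← conjTranspose_eq_transpose_of_trivial]
  exact IsUnit.posDef_star_right_conjugate_iff hF

open scoped MatrixOrder in
theorem PosDef.exists_eq_mul_transpose_of_commute {J Q : Matrix ι ι ℝ} (hQ : Q.PosDef)
    (hJQ : Commute J Q) : ∃ A, IsUnit A ∧ A * J = J * A ∧ Q = A * Aᵀ := by
  have hA : (CFC.sqrt Q).PosSemidef := (CFC.sqrt_nonneg Q).posSemidef
  have hAA : CFC.sqrt Q * CFC.sqrt Q = Q := CFC.sqrt_mul_sqrt_self Q hQ.posSemidef.nonneg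
  refine ⟨CFC.sqrt Q, ?_, (hJQ.symm.cfcₙ_nnreal NNReal.sqrt).eq, ?_⟩
  · exact isUnit_of_mul_isUnit_left (hAA ▸ hQ.isUnit)
  · rw [← conjTranspose_eq_transpose_of_trivial, hA.1.eq, hAA]

theorem posDef_and_mul_mul_transpose_eq_self_iff {J Q : Matrix ι ι ℝ} (hJ : J * Jᵀ = 1) :
    Q.PosDef ∧ J * Q * Jᵀ = Q ↔ ∃ A, IsUnit A ∧ A * J = J * A ∧ Q = A * Aᵀ := by
  constructor
  · rintro ⟨hQ, hJQ⟩
    exact hQ.exists_eq_mul_transpose_of_commute ((mul_mul_transpose_eq_self_iff_commute hJ).mp hJQ)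
  · rintro ⟨A, hA, hAJ, rfl⟩
    exact ⟨by simpa using (posDef_mul_mul_transpose_iff hA).mpr PosDef.one,
      mul_mul_transpose_eq_self_of_commute hJ hAJ⟩

end Matrix

theorem stmt_2_general (n : ℕ) (J F₀ : Matrix (Fin n) (Fin n) ℝ)
    (hJ : J * Jᵀ = 1) (hF₀ : IsUnit F₀) (M : Matrix (Fin n) (Fin n) ℝ)
    (hMdef : M = F₀ * J * F₀⁻¹) :
    {P : Matrix (Fin n) (Fin n) ℝ | P.PosDef ∧ M * P * Mᵀ = P} =
      {X : Matrix (Fin n) (Fin n) ℝ | ∃ A : Matrix (Fin n) (Fin n) ℝ, IsUnit A ∧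
        A * J = J * A ∧ X = F₀ * A * Aᵀ * F₀ᵀ} := by
  ext P
  obtain ⟨Q, rfl⟩ := exists_eq_mul_mul_transpose hF₀ P
  simp only [Set.mem_ofPred_eq, hMdef, posDef_mul_mul_transpose_iff hF₀,
    similar_mul_mul_transpose_eq_self_iff hF₀, posDef_and_mul_mul_transpose_eq_self_iff hJ]
  refine exists_congr fun A => and_congr_right' (and_congr_right' ?_)
  rw [Matrix.mul_assoc F₀ A, mul_mul_transpose_inj hF₀]

theorem stmt_2 (n : ℕ) (hn : 1 ≤ n) (J F₀ : Matrix (Fin n) (Fin n) ℝ)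
    (hJ : J * Jᵀ = 1) (hF₀ : IsUnit F₀) (M : Matrix (Fin n) (Fin n) ℝ)
    (hMdef : M = F₀ * J * F₀⁻¹) :
    {P : Matrix (Fin n) (Fin n) ℝ | P.PosDef ∧ M * P * Mᵀ = P} =
      {X : Matrix (Fin n) (Fin n) ℝ | ∃ A : Matrix (Fin n) (Fin n) ℝ, IsUnit A ∧
        A * J = J * A ∧ X = F₀ * A * Aᵀ * F₀ᵀ} :=
  stmt_2_general n J F₀ hJ hF₀ M hMdef
end

section
/- Let n ≥ 1 and let M be an invertible real n×n matrix. There exists a symmetric positive definite matrix P with (det P)^{−2/n} · M P Mᵀ = P if and only if there exist an invertible real n×n matrix C, a nonzero real number λ, and a real orthogonal matrix U such that C⁻¹ M C = λ U (i.e., M is similar to a nonzero real multiple of an orthogonal matrix). -/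
/-!
The map `P ↦ (det P)^(-2/n) • M P Mᵀ` is homogeneous of degree `-1` in `P`, so after rescaling `P`
it has a positive definite fixed point iff `M P Mᵀ = μ • P` for some positive definite `P` and
`μ > 0`. Writing `P = C Cᵀ`, this says `A Aᵀ = μ • 1` for `A = C⁻¹ M C`, i.e. `A / √μ` is orthogonal.
-/

open Matrix

section Conjugation

variable {ι : Type*} [Fintype ι] [DecidableEq ι]

lemma Matrix.PosDef.exists_isUnit_mul_transpose_eq {P : Matrix ι ι ℝ} (hP : P.PosDef) :
    ∃ C : Matrix ι ι ℝ, IsUnit C ∧ C * Cᵀ = P := by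
  open scoped MatrixOrder in
  have hP₀ : 0 ≤ P := hP.posSemidef.nonneg
  refine ⟨CFC.sqrt P, (CFC.isUnit_sqrt_iff P).mpr hP.isUnit, ?_⟩
  rw [← conjTranspose_eq_transpose_of_trivial, ← star_eq_conjTranspose,
    (CFC.sqrt_nonneg P).star_eq, CFC.sqrt_mul_sqrt_self P]

lemma Matrix.posDef_mul_transpose_self {C : Matrix ι ι ℝ} (hC : IsUnit C) : (C * Cᵀ).PosDef := by
  simpa using PosDef.mul_conjTranspose_self C (vecMul_injective_iff_isUnit.mpr hC)

lemma Matrix.conj_mul_transpose_eq_smul_one_iff {C : Matrix ι ι ℝ} (hC : IsUnit C)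
    (M : Matrix ι ι ℝ) (μ : ℝ) :
    C⁻¹ * M * C * (C⁻¹ * M * C)ᵀ = μ • 1 ↔ M * (C * Cᵀ) * Mᵀ = μ • (C * Cᵀ) := by
  have hC' : IsUnit C.det := (isUnit_iff_isUnit_det C).mp hC
  have hCC : C * C⁻¹ = 1 := mul_nonsing_inv C hC'
  have hCCt : C⁻¹ᵀ * Cᵀ = 1 := by rw [← transpose_mul, hCC, transpose_one]
  have hCtCt : Cᵀ * C⁻¹ᵀ = 1 := by rw [← transpose_mul, nonsing_inv_mul C hC', transpose_one]
  have hconj : C⁻¹ * M * C * (C⁻¹ * M * C)ᵀ = C⁻¹ * (M * (C * Cᵀ) * Mᵀ) * C⁻¹ᵀ := by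
    simp only [transpose_mul, Matrix.mul_assoc]
  rw [hconj]
  constructor
  · intro h
    calc M * (C * Cᵀ) * Mᵀ = C * (C⁻¹ * (M * (C * Cᵀ) * Mᵀ) * C⁻¹ᵀ) * Cᵀ := by
          simp only [← Matrix.mul_assoc, hCC, one_mul]
          simp only [Matrix.mul_assoc, hCCt, Matrix.mul_one]
      _ = μ • (C * Cᵀ) := by rw [h, Matrix.mul_smul, Matrix.mul_one, Matrix.smul_mul]
  · intro h
    rw [h, Matrix.mul_smul, Matrix.smul_mul, ← Matrix.mul_assoc, nonsing_inv_mul C hC',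
      Matrix.one_mul, hCtCt]

lemma Matrix.exists_smul_orthogonal_iff {A : Matrix ι ι ℝ} :
    (∃ lam : ℝ, lam ≠ 0 ∧ ∃ U : Matrix ι ι ℝ, U * Uᵀ = 1 ∧ A = lam • U) ↔
      ∃ μ : ℝ, 0 < μ ∧ A * Aᵀ = μ • 1 := by
  constructor
  · rintro ⟨lam, hlam, U, hU, rfl⟩
    refine ⟨lam ^ 2, by positivity, ?_⟩
    rw [transpose_smul, Matrix.smul_mul, Matrix.mul_smul, hU, smul_smul, sq]
  · rintro ⟨μ, hμ, hA⟩
    have hsqrt : √μ ≠ 0 := (Real.sqrt_pos.mpr hμ).ne'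
    refine ⟨√μ, hsqrt, (√μ)⁻¹ • A, ?_, by rw [smul_smul, mul_inv_cancel₀ hsqrt, one_smul]⟩
    rw [transpose_smul, Matrix.smul_mul, Matrix.mul_smul, hA, smul_smul, smul_smul,
      ← mul_inv, Real.mul_self_sqrt hμ.le, inv_mul_cancel₀ hμ.ne', one_smul]

end Conjugation

lemma Matrix.det_smul_rpow_div {n : ℕ} (hn : n ≠ 0) {A : Matrix (Fin n) (Fin n) ℝ}
    (hA : 0 ≤ A.det) {t : ℝ} (ht : 0 ≤ t) (r : ℝ) :
    (t • A).det ^ (r / n) = t ^ r * A.det ^ (r / n) := by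
  have hnr : (n : ℝ) * (r / n) = r := by field_simp
  rw [det_smul, Fintype.card_fin, Real.mul_rpow (by positivity) hA, ← Real.rpow_natCast,
    ← Real.rpow_mul ht, hnr]

lemma Matrix.exists_posDef_rpow_det_smul_eq_iff {n : ℕ} (hn : n ≠ 0)
    (M : Matrix (Fin n) (Fin n) ℝ) :
    (∃ P : Matrix (Fin n) (Fin n) ℝ, P.PosDef ∧ (P.det ^ (-(2 : ℝ) / n)) • (M * P * Mᵀ) = P) ↔
      ∃ P : Matrix (Fin n) (Fin n) ℝ, P.PosDef ∧ ∃ μ : ℝ, 0 < μ ∧ M * P * Mᵀ = μ • P := by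
  constructor
  · rintro ⟨P, hP, hfix⟩
    have hc : 0 < P.det ^ (-(2 : ℝ) / n) := Real.rpow_pos_of_pos hP.det_pos _
    refine ⟨P, hP, (P.det ^ (-(2 : ℝ) / n))⁻¹, inv_pos.mpr hc, ?_⟩
    rw [eq_inv_smul_iff₀ hc.ne', hfix]
  · rintro ⟨P, hP, μ, hμ, hMP⟩
    set c := P.det ^ (-(2 : ℝ) / n)
    have hc : 0 < c := Real.rpow_pos_of_pos hP.det_pos _
    -- `t` is chosen so that `t ^ 2 = c * μ`: rescaling by `t` multiplies the map by `t⁻¹`.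
    set t := √(c * μ)
    have ht : 0 < t := Real.sqrt_pos.mpr (by positivity)
    refine ⟨t • P, hP.smul ht, ?_⟩
    rw [det_smul_rpow_div hn hP.det_pos.le ht.le, Real.rpow_neg ht.le, Real.rpow_two,
      Matrix.mul_smul, Matrix.smul_mul, hMP, smul_smul, smul_smul]
    congr 1
    show (t ^ 2)⁻¹ * c * t * μ = t
    rw [Real.sq_sqrt (by positivity)]
    field_simp

theorem stmt_6_general (n : ℕ) (hn : 1 ≤ n) (M : Matrix (Fin n) (Fin n) ℝ) :
    (∃ P : Matrix (Fin n) (Fin n) ℝ,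
        P.PosDef ∧ (P.det ^ (-(2 : ℝ) / n)) • (M * P * Mᵀ) = P) ↔
      (∃ (C : Matrix (Fin n) (Fin n) ℝ) (lam : ℝ) (U : Matrix (Fin n) (Fin n) ℝ),
        IsUnit C ∧ lam ≠ 0 ∧ U * Uᵀ = 1 ∧ C⁻¹ * M * C = lam • U) := by
  rw [exists_posDef_rpow_det_smul_eq_iff (by omega)]
  constructor
  · rintro ⟨P, hP, μ, hμ, hMP⟩
    obtain ⟨C, hC, rfl⟩ := hP.exists_isUnit_mul_transpose_eq
    obtain ⟨lam, hlam, U, hU, hCMC⟩ :=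
      exists_smul_orthogonal_iff.mpr ⟨μ, hμ, (conj_mul_transpose_eq_smul_one_iff hC M μ).mpr hMP⟩
    exact ⟨C, lam, U, hC, hlam, hU, hCMC⟩
  · rintro ⟨C, lam, U, hC, hlam, hU, hCMC⟩
    obtain ⟨μ, hμ, hA⟩ := exists_smul_orthogonal_iff.mp ⟨lam, hlam, U, hU, hCMC⟩
    exact ⟨C * Cᵀ, posDef_mul_transpose_self hC, μ, hμ,
      (conj_mul_transpose_eq_smul_one_iff hC M μ).mp hA⟩

theorem stmt_6 (n : ℕ) (hn : 1 ≤ n) (M : Matrix (Fin n) (Fin n) ℝ) (hM : IsUnit M) :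
    (∃ P : Matrix (Fin n) (Fin n) ℝ,
        P.PosDef ∧ (P.det ^ (-(2 : ℝ) / n)) • (M * P * Mᵀ) = P) ↔
      (∃ (C : Matrix (Fin n) (Fin n) ℝ) (lam : ℝ) (U : Matrix (Fin n) (Fin n) ℝ),
        IsUnit C ∧ lam ≠ 0 ∧ U * Uᵀ = 1 ∧ C⁻¹ * M * C = lam • U) :=
  stmt_6_general n hn M
end

section
/- Let n ≥ 1 and let M be an invertible real n×n matrix. There exists a symmetric positive definite matrix P with M P⁻¹ Mᵀ = P if and only if there exist an invertible real matrix C and a real orthogonal matrix U such that M = C U Cᵀ (i.e., M is ℝ-congruent to an orthogonal matrix). -/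
/-!
Positive definite matrices are exactly the matrices `C * Cᵀ` with `C` invertible, and every matrix
is congruent by such a `C` to some `U`. For `M = C * U * Cᵀ` and `P = C * Cᵀ` one computes
`M * P⁻¹ * Mᵀ = C * (U * Uᵀ) * Cᵀ`, so `P` is a fixed point of `X ↦ M * X⁻¹ * Mᵀ` exactly when
`U` is orthogonal.
-/

open Matrix

namespace Matrix

section Congruence

variable {n α : Type*} [Fintype n] [DecidableEq n] [CommRing α] {C : Matrix n n α}

lemma exists_eq_mul_mul_transpose_s10 (hC : IsUnit C) (M : Matrix n n α) :
    ∃ U, M = C * U * Cᵀ := by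
  have := hC.invertible
  have := invertibleTranspose C
  exact ⟨C⁻¹ * M * Cᵀ⁻¹, by simp [mul_assoc]⟩

lemma mul_mul_transpose_mul_inv_mul_transpose (hC : IsUnit C) (U : Matrix n n α) :
    C * U * Cᵀ * (C * Cᵀ)⁻¹ * (C * U * Cᵀ)ᵀ = C * (U * Uᵀ) * Cᵀ := by
  have := hC.invertible
  have := invertibleTranspose C
  simp only [mul_inv_rev, transpose_mul, transpose_transpose, mul_assoc,
    mul_inv_cancel_left_of_invertible, inv_mul_cancel_left_of_invertible]

lemma mul_mul_transpose_eq_mul_transpose_iff (hC : IsUnit C) (X : Matrix n n α) :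
    C * X * Cᵀ = C * Cᵀ ↔ X = 1 := by
  refine ⟨fun h => ?_, fun h => by rw [h, mul_one]⟩
  have h' : C * X * Cᵀ = C * 1 * Cᵀ := by rwa [mul_one]
  exact hC.mul_left_cancel (((isUnit_transpose C).mpr hC).mul_right_cancel h')

end Congruence

variable {n : Type*} [Fintype n] [DecidableEq n]

lemma posDef_iff_exists_isUnit_eq_mul_transpose {P : Matrix n n ℝ} :
    P.PosDef ↔ ∃ C : Matrix n n ℝ, IsUnit C ∧ P = C * Cᵀ := by
  constructor
  · intro hP
    open scoped MatrixOrder in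
    obtain ⟨B, rfl⟩ := CStarAlgebra.nonneg_iff_eq_star_mul_self.mp hP.posSemidef.nonneg
    refine ⟨Bᵀ, (isUnit_transpose B).mpr (isUnit_of_mul_isUnit_right hP.isUnit), ?_⟩
    rw [transpose_transpose, star_eq_conjTranspose, conjTranspose_eq_transpose_of_trivial]
  · rintro ⟨C, hC, rfl⟩
    simpa only [conjTranspose_eq_transpose_of_trivial] using
      PosDef.mul_conjTranspose_self C (vecMul_injective_of_isUnit hC)

end Matrix

theorem stmt_10_general (n : ℕ) (M : Matrix (Fin n) (Fin n) ℝ) :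
    (∃ P : Matrix (Fin n) (Fin n) ℝ, P.PosDef ∧ M * P⁻¹ * Mᵀ = P) ↔
      (∃ C U : Matrix (Fin n) (Fin n) ℝ, IsUnit C ∧ U * Uᵀ = 1 ∧ M = C * U * Cᵀ) := by
  simp only [posDef_iff_exists_isUnit_eq_mul_transpose]
  constructor
  · rintro ⟨_, ⟨C, hC, rfl⟩, hfix⟩
    obtain ⟨U, rfl⟩ := exists_eq_mul_mul_transpose_s10 hC M
    rw [mul_mul_transpose_mul_inv_mul_transpose hC,
      mul_mul_transpose_eq_mul_transpose_iff hC] at hfix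
    exact ⟨C, U, hC, hfix, rfl⟩
  · rintro ⟨C, U, hC, hU, rfl⟩
    refine ⟨C * Cᵀ, ⟨C, hC, rfl⟩, ?_⟩
    rw [mul_mul_transpose_mul_inv_mul_transpose hC, hU, mul_one]

theorem stmt_10 (n : ℕ) (hn : 1 ≤ n) (M : Matrix (Fin n) (Fin n) ℝ) (hM : IsUnit M) :
    (∃ P : Matrix (Fin n) (Fin n) ℝ, P.PosDef ∧ M * P⁻¹ * Mᵀ = P) ↔
      (∃ C U : Matrix (Fin n) (Fin n) ℝ, IsUnit C ∧ U * Uᵀ = 1 ∧ M = C * U * Cᵀ) :=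
  stmt_10_general n M
end

section
/- Let n ≥ 1 and let M be an invertible real n×n matrix. Then M is ℝ-congruent to an orthogonal matrix if and only if M is ℝ-congruent to a normal matrix (a matrix A with A Aᵀ = Aᵀ A). -/
/-!
Over `ℝ` the adjoint is the transpose, so a normal invertible matrix `A` commutes with the
positive definite matrix `P = A Aᵀ` and hence with every real power of `P`. Then
`U = P^(-1/2) A` is orthogonal and `A = P^(1/4) U P^(1/4)` is a congruence by the symmetric
invertible matrix `P^(1/4)`. Conversely an orthogonal matrix is normal.
-/

open Matrix

theorem IsStarNormal.mul_mem_unitary {R : Type*} [Monoid R] [StarMul R] {a b : R}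
    [IsStarNormal a] (hb : IsSelfAdjoint b) (hba : Commute b a) (h : b * b * (a * star a) = 1) :
    b * a ∈ unitary R := by
  have hba_star : Commute b (star a) := by simpa [hb.star_eq] using hba.star_star
  refine ⟨?_, ?_⟩
  · calc star (b * a) * (b * a) = star a * (b * b) * a := by simp [hb.star_eq, mul_assoc]
      _ = b * b * (a * star a) := by
        rw [← (hba_star.mul_left hba_star).eq, mul_assoc, star_comm_self']
      _ = 1 := h
  · calc b * a * star (b * a) = b * (a * star a) * b := by simp [hb.star_eq, mul_assoc]
      _ = 1 := by rw [mul_assoc, ← (hba.mul_right hba_star).eq, ← mul_assoc, h]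

section ContinuousFunctionalCalculus

open CFC

variable {A : Type*} [PartialOrder A] [Ring A] [StarRing A] [TopologicalSpace A]
  [StarOrderedRing A] [Algebra ℝ A] [ContinuousFunctionalCalculus ℝ A IsSelfAdjoint]
  [NonnegSpectrumClass ℝ A] [IsTopologicalRing A] [T2Space A]

theorem Commute.cfc_rpow {a b : A} (h : Commute a b) (y : ℝ) : Commute (a ^ y) b :=
  h.cfc_nnreal _

theorem IsStarNormal.exists_eq_mul_unitary_mul_star {a : A} (ha : IsUnit a) [IsStarNormal a] :
    ∃ t : A, IsUnit t ∧ ∃ u ∈ unitary A, a = t * u * star t := by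
  set p := a * star a
  have hp : IsStrictlyPositive p := (ha.mul ha.star).isStrictlyPositive (mul_star_self_nonneg a)
  have hpa : Commute p a := (Commute.refl a).mul_left star_comm_self
  have hb : p ^ (-(1 / 2) : ℝ) * p ^ (-(1 / 2) : ℝ) * p = 1 := by
    nth_rw 3 [← rpow_one p]
    rw [← rpow_add hp.isUnit, ← rpow_add hp.isUnit]
    norm_num [rpow_zero p]
  have ht : p ^ (1 / 4 : ℝ) * p ^ (-(1 / 2) : ℝ) * p ^ (1 / 4 : ℝ) = 1 := by
    rw [← rpow_add hp.isUnit, ← rpow_add hp.isUnit]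
    norm_num [rpow_zero p]
  refine ⟨p ^ (1 / 4 : ℝ), hp.isUnit.cfcRpow _, p ^ (-(1 / 2) : ℝ) * a,
    IsStarNormal.mul_mem_unitary rpow_nonneg.isSelfAdjoint (hpa.cfc_rpow _) hb, ?_⟩
  rw [rpow_nonneg.isSelfAdjoint.star_eq]
  calc a = p ^ (1 / 4 : ℝ) * p ^ (-(1 / 2) : ℝ) * p ^ (1 / 4 : ℝ) * a := by rw [ht, one_mul]
    _ = _ := by rw [mul_assoc _ (p ^ (1 / 4 : ℝ)), (hpa.cfc_rpow _).eq]; simp only [mul_assoc]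

end ContinuousFunctionalCalculus

open scoped MatrixOrder in
theorem stmt_11_general (n : ℕ) (M : Matrix (Fin n) (Fin n) ℝ) (hM : IsUnit M) :
    (∃ C U : Matrix (Fin n) (Fin n) ℝ, IsUnit C ∧ U * Uᵀ = 1 ∧ M = C * U * Cᵀ) ↔
      (∃ C A : Matrix (Fin n) (Fin n) ℝ, IsUnit C ∧ A * Aᵀ = Aᵀ * A ∧ M = C * A * Cᵀ) := by
  have star_eq (X : Matrix (Fin n) (Fin n) ℝ) : star X = Xᵀ := by
    rw [star_eq_conjTranspose, conjTranspose_eq_transpose_of_trivial]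
  constructor
  · rintro ⟨C, U, hC, hU, rfl⟩
    exact ⟨C, U, hC, by rw [hU, mul_eq_one_comm.mp hU], rfl⟩
  · rintro ⟨C, A, hC, hA, rfl⟩
    have hAu : IsUnit A := isUnit_of_mul_isUnit_right (isUnit_of_mul_isUnit_left hM)
    have : IsStarNormal A := ⟨by rw [commute_iff_eq, star_eq, hA]⟩
    obtain ⟨T, hT, U, hU, rfl⟩ := this.exists_eq_mul_unitary_mul_star hAu
    refine ⟨C * T, U, hC.mul hT, by simpa [star_eq] using Unitary.mul_star_self_of_mem hU, ?_⟩
    simp only [star_eq, transpose_mul, mul_assoc]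

theorem stmt_11 (n : ℕ) (hn : 1 ≤ n) (M : Matrix (Fin n) (Fin n) ℝ) (hM : IsUnit M) :
    (∃ C U : Matrix (Fin n) (Fin n) ℝ, IsUnit C ∧ U * Uᵀ = 1 ∧ M = C * U * Cᵀ) ↔
      (∃ C A : Matrix (Fin n) (Fin n) ℝ, IsUnit C ∧ A * Aᵀ = Aᵀ * A ∧ M = C * A * Cᵀ) :=
  stmt_11_general n M hM
end

section
/- Let n ≥ 1 and let M be an invertible real n×n matrix. There exists a symmetric positive definite matrix P with M P⁻¹ Mᵀ = P if and only if there exists a symmetric positive definite matrix Q with (M M^{−T}) Q (M M^{−T})ᵀ = Q, where M^{−T} = (Mᵀ)⁻¹ (i.e., Γ_{M M^{−T}} has a positive definite fixed point). -/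
/-!
Applying `Γ_M ∘ j` twice gives the congruence `Γ_{M M⁻ᴴ}`, so a fixed point of the former is one
of the latter. Conversely, write `Q = S Sᴴ` and `M = S B Sᴴ`. Congruence by `S` intertwines
`Γ_M ∘ j` with `Γ_B ∘ j`, and `Γ_{Mᴴ} ∘ j` inverts `Γ_M ∘ j`; so `Q` being fixed by `(Γ_M ∘ j)²`
reads `S (B Bᴴ) Sᴴ = S (Bᴴ B) Sᴴ`, i.e. `B` is normal. For normal invertible `B` the square root
`V = √(B Bᴴ)` is fixed by `Γ_B ∘ j`, since `(B V⁻¹ Bᴴ)² = B V⁻¹ (Bᴴ B) V⁻¹ Bᴴ = B Bᴴ`, and then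
`P = S V Sᴴ` is fixed by `Γ_M ∘ j`.
-/

open Matrix
open scoped MatrixOrder ComplexOrder

namespace Matrix

variable {𝕜 n : Type*} [RCLike 𝕜] [Fintype n] [DecidableEq n]

/-- The paper's `Γ_M ∘ j`. -/
noncomputable def congrInv (M X : Matrix n n 𝕜) : Matrix n n 𝕜 := M * X⁻¹ * Mᴴ

lemma isUnit_congrInv {M X : Matrix n n 𝕜} (hM : IsUnit M) (hX : IsUnit X) :
    IsUnit (congrInv M X) :=
  (hM.mul (isUnit_nonsing_inv_iff.mpr hX)).mul ((isUnit_conjTranspose M).mpr hM)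

lemma congrInv_conj {S : Matrix n n 𝕜} (hS : IsUnit S) (B X : Matrix n n 𝕜) :
    congrInv (S * B * Sᴴ) (S * X * Sᴴ) = S * congrInv B X * Sᴴ := by
  have hSd : IsUnit S.det := (isUnit_iff_isUnit_det S).mp hS
  have hSHd : IsUnit Sᴴ.det := (isUnit_iff_isUnit_det _).mp ((isUnit_conjTranspose S).mpr hS)
  simp only [congrInv, Matrix.mul_inv_rev, conjTranspose_mul, conjTranspose_conjTranspose,
    Matrix.mul_assoc, mul_nonsing_inv_cancel_left _ _ hSHd, nonsing_inv_mul_cancel_left _ _ hSd]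

lemma congrInv_congrInv {M X : Matrix n n 𝕜} (hX : IsUnit X) :
    congrInv M (congrInv M X) = M * Mᴴ⁻¹ * X * (M * Mᴴ⁻¹)ᴴ := by
  have hXd : IsUnit X.det := (isUnit_iff_isUnit_det X).mp hX
  simp only [congrInv, Matrix.mul_inv_rev, nonsing_inv_nonsing_inv _ hXd, conjTranspose_mul,
    conjTranspose_nonsing_inv, conjTranspose_conjTranspose, Matrix.mul_assoc]

lemma congrInv_conjTranspose_congrInv {M X : Matrix n n 𝕜} (hM : IsUnit M) (hX : IsUnit X) :
    congrInv Mᴴ (congrInv M X) = X := by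
  have hMd : IsUnit M.det := (isUnit_iff_isUnit_det M).mp hM
  have hMHd : IsUnit Mᴴ.det := (isUnit_iff_isUnit_det _).mp ((isUnit_conjTranspose M).mpr hM)
  have hXd : IsUnit X.det := (isUnit_iff_isUnit_det X).mp hX
  simp only [congrInv, Matrix.mul_inv_rev, nonsing_inv_nonsing_inv _ hXd,
    conjTranspose_conjTranspose, Matrix.mul_assoc, mul_nonsing_inv_cancel_left _ _ hMHd,
    nonsing_inv_mul _ hMd, Matrix.mul_one]

lemma exists_posDef_congrInv_eq_self_of_isStarNormal {B : Matrix n n 𝕜} (hB : IsUnit B)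
    (hBn : IsStarNormal B) : ∃ V : Matrix n n 𝕜, V.PosDef ∧ congrInv B V = V := by
  have hG : (B * Bᴴ).PosDef := by
    simpa [star_eq_conjTranspose] using
      hB.posDef_star_right_conjugate_iff.mpr (PosDef.one (n := n) (R := 𝕜))
  set V := CFC.sqrt (B * Bᴴ)
  have hV : V.PosDef := hG.isStrictlyPositive.sqrt.posDef
  have hVV : V * V = B * Bᴴ := CFC.sqrt_mul_sqrt_self _ hG.posSemidef.nonneg
  have hVd : IsUnit V.det := (isUnit_iff_isUnit_det V).mp hV.isUnit
  have hBB : Bᴴ * B = B * Bᴴ := hBn.star_comm_self.eq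
  refine ⟨V, hV, (CFC.sqrt_unique ?_ ?_).symm⟩
  · calc congrInv B V * congrInv B V = B * (V⁻¹ * (Bᴴ * B) * V⁻¹) * Bᴴ := by
          simp only [congrInv, Matrix.mul_assoc]
      _ = B * (V⁻¹ * (V * V) * V⁻¹) * Bᴴ := by rw [hBB, hVV]
      _ = B * Bᴴ := by
          rw [← Matrix.mul_assoc V⁻¹, nonsing_inv_mul _ hVd, Matrix.one_mul,
            mul_nonsing_inv _ hVd, Matrix.mul_one]
  · exact (hB.posDef_star_right_conjugate_iff.mpr hV.inv).posSemidef.nonneg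

lemma isStarNormal_iff_congrInv_eq {S : Matrix n n 𝕜} (hS : IsUnit S) (B : Matrix n n 𝕜) :
    IsStarNormal B ↔ congrInv (S * B * Sᴴ) (S * Sᴴ) = congrInv (S * B * Sᴴ)ᴴ (S * Sᴴ) := by
  have hSH : IsUnit Sᴴ := (isUnit_conjTranspose S).mpr hS
  rw [conjTranspose_mul, conjTranspose_mul, conjTranspose_conjTranspose, ← Matrix.mul_assoc,
    show S * Sᴴ = S * 1 * Sᴴ by rw [Matrix.mul_one], congrInv_conj hS, congrInv_conj hS,
    hSH.mul_left_inj, hS.mul_right_inj, isStarNormal_iff, commute_iff_eq, eq_comm]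
  simp only [congrInv, inv_one, Matrix.mul_one, conjTranspose_conjTranspose, star_eq_conjTranspose]

lemma exists_posDef_congrInv_eq_self_of_fixed {M Q : Matrix n n 𝕜} (hM : IsUnit M)
    (hQ : Q.PosDef) (hfix : M * Mᴴ⁻¹ * Q * (M * Mᴴ⁻¹)ᴴ = Q) :
    ∃ P : Matrix n n 𝕜, P.PosDef ∧ congrInv M P = P := by
  obtain ⟨S, hS, rfl⟩ :=
    CStarAlgebra.isStrictlyPositive_iff_eq_mul_star_self.mp hQ.isStrictlyPositive
  have hSd : IsUnit S.det := (isUnit_iff_isUnit_det S).mp hS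
  have hSHd : IsUnit Sᴴ.det := (isUnit_iff_isUnit_det _).mp ((isUnit_conjTranspose S).mpr hS)
  obtain ⟨B, rfl⟩ : ∃ B, M = S * B * Sᴴ := ⟨S⁻¹ * M * Sᴴ⁻¹, by
    simp only [Matrix.mul_assoc, mul_nonsing_inv_cancel_left _ _ hSd, nonsing_inv_mul _ hSHd,
      Matrix.mul_one]⟩
  have hB : IsUnit B := by
    rw [isUnit_iff_isUnit_det] at hM ⊢
    simp only [det_mul, IsUnit.mul_iff] at hM
    exact hM.1.2
  have hBn : IsStarNormal B := by
    rw [← congrInv_congrInv hQ.isUnit] at hfix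
    have h := congrArg (congrInv (S * B * Sᴴ)ᴴ) hfix
    rw [congrInv_conjTranspose_congrInv hM (isUnit_congrInv hM hQ.isUnit)] at h
    exact (isStarNormal_iff_congrInv_eq hS B).mpr h
  obtain ⟨V, hV, hVfix⟩ := exists_posDef_congrInv_eq_self_of_isStarNormal hB hBn
  exact ⟨S * V * Sᴴ, hS.posDef_star_right_conjugate_iff.mpr hV, by rw [congrInv_conj hS, hVfix]⟩

theorem exists_posDef_congrInv_eq_self_iff {M : Matrix n n 𝕜} (hM : IsUnit M) :
    (∃ P : Matrix n n 𝕜, P.PosDef ∧ congrInv M P = P) ↔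
      ∃ Q : Matrix n n 𝕜, Q.PosDef ∧ M * Mᴴ⁻¹ * Q * (M * Mᴴ⁻¹)ᴴ = Q :=
  ⟨fun ⟨P, hP, hfix⟩ => ⟨P, hP, by rw [← congrInv_congrInv hP.isUnit, hfix, hfix]⟩,
    fun ⟨_, hQ, hfix⟩ => exists_posDef_congrInv_eq_self_of_fixed hM hQ hfix⟩

end Matrix

theorem stmt_12_general (n : ℕ) (M : Matrix (Fin n) (Fin n) ℝ) (hM : IsUnit M) :
    (∃ P : Matrix (Fin n) (Fin n) ℝ, P.PosDef ∧ M * P⁻¹ * Mᵀ = P) ↔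
      (∃ Q : Matrix (Fin n) (Fin n) ℝ, Q.PosDef ∧
        (M * (Mᵀ)⁻¹) * Q * (M * (Mᵀ)⁻¹)ᵀ = Q) := by
  simpa only [congrInv, conjTranspose_eq_transpose_of_trivial] using
    exists_posDef_congrInv_eq_self_iff hM

theorem stmt_12 (n : ℕ) (hn : 1 ≤ n) (M : Matrix (Fin n) (Fin n) ℝ) (hM : IsUnit M) :
    (∃ P : Matrix (Fin n) (Fin n) ℝ, P.PosDef ∧ M * P⁻¹ * Mᵀ = P) ↔
      (∃ Q : Matrix (Fin n) (Fin n) ℝ, Q.PosDef ∧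
        (M * (Mᵀ)⁻¹) * Q * (M * (Mᵀ)⁻¹)ᵀ = Q) :=
  stmt_12_general n M hM
end

section
/- Let n ≥ 1 and let M, S be invertible real n×n matrices. Then S⁻¹ M S^{−T} is a normal matrix if and only if S⁻¹ (M M^{−T}) S is an orthogonal matrix, where S^{−T} = (Sᵀ)⁻¹ and M^{−T} = (Mᵀ)⁻¹. In particular (taking S = I), M is normal if and only if M M^{−T} is orthogonal. -/
open Matrix

lemma aux14 {n : ℕ} (M S : Matrix (Fin n) (Fin n) ℝ) [Invertible M] [Invertible S] :
    ((S⁻¹ * M * (Sᵀ)⁻¹) * (S⁻¹ * M * (Sᵀ)⁻¹)ᵀ = (S⁻¹ * M * (Sᵀ)⁻¹)ᵀ * (S⁻¹ * M * (Sᵀ)⁻¹) ↔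
      (S⁻¹ * (M * (Mᵀ)⁻¹) * S) * (S⁻¹ * (M * (Mᵀ)⁻¹) * S)ᵀ = 1) := by
  haveI : Invertible Mᵀ := M.invertibleTranspose
  haveI : Invertible Sᵀ := S.invertibleTranspose
  have stepA : ((S⁻¹ * M * (Sᵀ)⁻¹) * (S⁻¹ * M * (Sᵀ)⁻¹)ᵀ = (S⁻¹ * M * (Sᵀ)⁻¹)ᵀ * (S⁻¹ * M * (Sᵀ)⁻¹)) ↔
      (M * (Sᵀ⁻¹ * (S⁻¹ * Mᵀ)) = Mᵀ * (Sᵀ⁻¹ * (S⁻¹ * M))) := by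
    constructor
    · intro h
      simpa [Matrix.mul_assoc, transpose_nonsing_inv] using congrArg (fun X => S * X * Sᵀ) h
    · intro h
      simpa [Matrix.mul_assoc, transpose_nonsing_inv] using congrArg (fun X => S⁻¹ * X * Sᵀ⁻¹) h
  have stepB : (M * (Sᵀ⁻¹ * (S⁻¹ * Mᵀ)) = Mᵀ * (Sᵀ⁻¹ * (S⁻¹ * M))) ↔
      (Mᵀ⁻¹ * (S * (Sᵀ * M⁻¹)) = M⁻¹ * (S * (Sᵀ * Mᵀ⁻¹))) := by
    constructor
    · intro h
      simpa [Matrix.mul_inv_rev, Matrix.mul_assoc] using congrArg (fun X => X⁻¹) h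
    · intro h
      simpa [Matrix.mul_inv_rev, Matrix.mul_assoc] using congrArg (fun X => X⁻¹) h
  have stepC : (Mᵀ⁻¹ * (S * (Sᵀ * M⁻¹)) = M⁻¹ * (S * (Sᵀ * Mᵀ⁻¹))) ↔
      ((S⁻¹ * (M * (Mᵀ)⁻¹) * S) * (S⁻¹ * (M * (Mᵀ)⁻¹) * S)ᵀ = 1) := by
    constructor
    · intro h
      simpa [Matrix.mul_assoc, transpose_nonsing_inv] using congrArg (fun X => S⁻¹ * (M * X * Mᵀ) * Sᵀ⁻¹) h
    · intro h
      simpa [Matrix.mul_assoc, transpose_nonsing_inv] using congrArg (fun X => M⁻¹ * (S * X * Sᵀ) * Mᵀ⁻¹) h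
  exact stepA.trans (stepB.trans stepC)

theorem stmt_14 (n : ℕ) (hn : 1 ≤ n) (M S : Matrix (Fin n) (Fin n) ℝ)
    (hM : IsUnit M) (hS : IsUnit S) :
    ((S⁻¹ * M * (Sᵀ)⁻¹) * (S⁻¹ * M * (Sᵀ)⁻¹)ᵀ = (S⁻¹ * M * (Sᵀ)⁻¹)ᵀ * (S⁻¹ * M * (Sᵀ)⁻¹) ↔
      (S⁻¹ * (M * (Mᵀ)⁻¹) * S) * (S⁻¹ * (M * (Mᵀ)⁻¹) * S)ᵀ = 1) ∧
    (M * Mᵀ = Mᵀ * M ↔ (M * (Mᵀ)⁻¹) * (M * (Mᵀ)⁻¹)ᵀ = 1) := by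
  haveI := hM.invertible
  haveI := hS.invertible
  refine ⟨aux14 M S, ?_⟩
  haveI : Invertible (1 : Matrix (Fin n) (Fin n) ℝ) := invertibleOne
  simpa using aux14 M (1 : Matrix (Fin n) (Fin n) ℝ)
end
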